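/- arXiv:0902.4483 — 9 statements merged into one kernel-verified Lean document; each statement's English description precedes it below -/
import Mathlib

section
/- Let n ≥ 1, let x_1 ≤ x_2 ≤ ... ≤ x_n be real numbers, and let α_1, ..., α_n be real numbers with ∑ α_i = 1. If α_1 < 0, then ∑_{i,j=1}^n α_i α_j |x_i - x_j| ≤ ∑_{i,j=2}^n β_i β_j |x_i - x_j|, where β_2 = α_1 + α_2 and β_i = α_i for 3 ≤ i ≤ n. -/
theorem stmt_0 (n : ℕ) (hn : 1 ≤ n) (x α : ℕ → ℝ)
    (hmono : ∀ i j, 1 ≤ i → i ≤ j → j ≤ n → x i ≤ x j)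
    (hsum : ∑ i ∈ Finset.Icc 1 n, α i = 1)
    (hneg : α 1 < 0)
    (β : ℕ → ℝ)
    (hβ2 : β 2 = α 1 + α 2)
    (hβ : ∀ i, 3 ≤ i → β i = α i) :
    ∑ i ∈ Finset.Icc 1 n, ∑ j ∈ Finset.Icc 1 n, α i * α j * |x i - x j| ≤
      ∑ i ∈ Finset.Icc 2 n, ∑ j ∈ Finset.Icc 2 n, β i * β j * |x i - x j| := by
  rcases Nat.lt_or_ge n 2 with h2 | h2
  · interval_cases n
    · simp at hsum
      linarith
  · set J := Finset.Icc 3 n with hJ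
    have e1 : Finset.Icc 1 n = insert 1 (insert 2 J) := by
      ext k; simp [Finset.mem_Icc, hJ]; omega
    have e2 : Finset.Icc 2 n = insert 2 J := by
      ext k; simp [Finset.mem_Icc, hJ]; omega
    have h1ni : (1:ℕ) ∉ insert 2 J := by simp [hJ, Finset.mem_Icc]
    have h2ni : (2:ℕ) ∉ J := by simp [hJ, Finset.mem_Icc]
    have hmem : ∀ j ∈ J, 3 ≤ j ∧ j ≤ n := by
      intro j hj; simpa [hJ, Finset.mem_Icc] using hj
    set A := ∑ j ∈ J, α j with hA
    set B := ∑ j ∈ J, α j * x j with hB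
    have hx12 : x 1 ≤ x 2 := hmono 1 2 le_rfl (by norm_num) h2
    have hx1 : ∀ j ∈ J, x 1 ≤ x j := fun j hj =>
      hmono 1 j le_rfl (by have := hmem j hj; omega) (hmem j hj).2
    have hx2 : ∀ j ∈ J, x 2 ≤ x j := fun j hj =>
      hmono 2 j (by norm_num) (by have := hmem j hj; omega) (hmem j hj).2
    have key : ∀ (c : ℝ) (p : ℕ), (∀ j ∈ J, x p ≤ x j) →
        ∑ j ∈ J, c * α j * |x p - x j| = c * B - c * x p * A := by
      intro c p hp
      rw [hB, hA, Finset.mul_sum, Finset.mul_sum, ← Finset.sum_sub_distrib]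
      apply Finset.sum_congr rfl
      intro j hj
      rw [abs_of_nonpos (by linarith [hp j hj])]
      ring
    have key' : ∀ (c : ℝ) (p : ℕ), (∀ j ∈ J, x p ≤ x j) →
        ∑ i ∈ J, α i * c * |x i - x p| = c * B - c * x p * A := by
      intro c p hp
      rw [hB, hA, Finset.mul_sum, Finset.mul_sum, ← Finset.sum_sub_distrib]
      apply Finset.sum_congr rfl
      intro j hj
      rw [abs_of_nonneg (by linarith [hp j hj])]
      ring
    have hβJ : ∀ j ∈ J, β j = α j := fun j hj => hβ j (hmem j hj).1
    -- expand hsum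
    rw [e1, Finset.sum_insert h1ni, Finset.sum_insert h2ni] at hsum
    rw [e1, e2]
    simp only [Finset.sum_insert h1ni, Finset.sum_insert h2ni]
    -- rewrite RHS β-sums into α-sums
    have r1 : ∑ j ∈ J, β 2 * β j * |x 2 - x j| = (α 1 + α 2) * B - (α 1 + α 2) * x 2 * A := by
      rw [← key (α 1 + α 2) 2 hx2]
      exact Finset.sum_congr rfl fun j hj => by rw [hβ2, hβJ j hj]
    have r2 : ∑ i ∈ J, (β i * β 2 * |x i - x 2| + ∑ j ∈ J, β i * β j * |x i - x j|)
        = ((α 1 + α 2) * B - (α 1 + α 2) * x 2 * A)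
          + ∑ i ∈ J, ∑ j ∈ J, α i * α j * |x i - x j| := by
      rw [Finset.sum_add_distrib]
      congr 1
      · rw [← key' (α 1 + α 2) 2 hx2]
        exact Finset.sum_congr rfl fun i hi => by rw [hβ2, hβJ i hi]
      · exact Finset.sum_congr rfl fun i hi =>
          Finset.sum_congr rfl fun j hj => by rw [hβJ i hi, hβJ j hj]
    have l1 : ∑ j ∈ J, α 1 * α j * |x 1 - x j| = α 1 * B - α 1 * x 1 * A :=
      key (α 1) 1 hx1
    have l2 : ∑ j ∈ J, α 2 * α j * |x 2 - x j| = α 2 * B - α 2 * x 2 * A :=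
      key (α 2) 2 hx2
    have l3 : ∑ i ∈ J, (α i * α 1 * |x i - x 1| + (α i * α 2 * |x i - x 2|
          + ∑ j ∈ J, α i * α j * |x i - x j|))
        = (α 1 * B - α 1 * x 1 * A) + ((α 2 * B - α 2 * x 2 * A)
          + ∑ i ∈ J, ∑ j ∈ J, α i * α j * |x i - x j|) := by
      rw [Finset.sum_add_distrib, Finset.sum_add_distrib,
        key' (α 1) 1 hx1, key' (α 2) 2 hx2]
    rw [r1, r2, l1, l2, l3]
    have habs1 : |x 1 - x 2| = x 2 - x 1 := by
      rw [abs_of_nonpos (by linarith)]; ring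
    have habs2 : |x 2 - x 1| = x 2 - x 1 := abs_of_nonneg (by linarith)
    rw [habs1, habs2, sub_self, sub_self, abs_zero]
    nlinarith [mul_nonneg (mul_nonneg (by linarith : (0:ℝ) ≤ -α 1)
      (by linarith : (0:ℝ) ≤ x 2 - x 1)) (by linarith : (0:ℝ) ≤ 1 - α 1), hsum]
end

section
/- Let n ≥ 1, let x_1, ..., x_n be real numbers and α_1, ..., α_n real numbers with ∑_{i=1}^n α_i = 1. Then ∑_{i,j=1}^n α_i α_j |x_i - x_j| ≤ (1/2) · max_{1 ≤ i,j ≤ n} |x_i - x_j|. -/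
/-!
Write `u_i = 𝟙[x_i, ∞)`. Then `(u_i - u_j)² = 𝟙[min, max)` has integral `|x_i - x_j|`, so the left
side is the integral of `∑ α_i α_j (u_i(t) - u_j(t))² = 2 F(t) (1 - F(t))` with `F = ∑ α_i u_i`
(using `u_i² = u_i` and `∑ α_i = 1`). This is at most `1/2` everywhere and vanishes outside
`[min x, max x)`, where all `u_i(t)` agree.
-/

open MeasureTheory Set

theorem Finset.sum_sum_mul_mul_sub_sq {ι R : Type*} [CommRing R] (s : Finset ι) (α u : ι → R) :
    ∑ i ∈ s, ∑ j ∈ s, α i * α j * (u i - u j) ^ 2 =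
      2 * ((∑ i ∈ s, α i) * ∑ i ∈ s, α i * u i ^ 2 - (∑ i ∈ s, α i * u i) ^ 2) := by
  have hterm : ∀ i j, α i * α j * (u i - u j) ^ 2 =
      α i * u i ^ 2 * α j + α i * (α j * u j ^ 2) - 2 * ((α i * u i) * (α j * u j)) :=
    fun i j => by ring
  simp only [hterm, Finset.sum_add_distrib, Finset.sum_sub_distrib, ← Finset.mul_sum,
    ← Finset.sum_mul]
  ring

theorem indicator_Ici_sub_indicator_Ici_sq (a b t : ℝ) :
    ((Ici a).indicator 1 t - (Ici b).indicator 1 t : ℝ) ^ 2 =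
      (Ico (min a b) (max a b)).indicator 1 t := by
  by_cases ha : a ≤ t <;> by_cases hb : b ≤ t <;>
    simp [indicator, ha, hb, not_le.mp]

theorem integral_indicator_Ico_min_max (a b : ℝ) :
    ∫ t, (Ico (min a b) (max a b)).indicator (1 : ℝ → ℝ) t = |a - b| := by
  rw [integral_indicator_one measurableSet_Ico, Real.volume_real_Ico_of_le min_le_max,
    max_sub_min_eq_abs, abs_sub_comm]

theorem integrable_indicator_Ico_const (a b c : ℝ) :
    Integrable ((Ico a b).indicator fun _ => c) :=
  (integrable_indicator_iff measurableSet_Ico).2 (integrableOn_const measure_Ico_lt_top.ne)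

theorem Finset.sup'_sub_inf'_le_sup'_abs_sub {ι : Type*} (s : Finset ι) (hs : s.Nonempty)
    (x : ι → ℝ) :
    s.sup' hs x - s.inf' hs x ≤ (s ×ˢ s).sup' (hs.product hs) fun p => |x p.1 - x p.2| := by
  obtain ⟨i, hi, hix⟩ := s.exists_mem_eq_sup' hs x
  obtain ⟨j, hj, hjx⟩ := s.exists_mem_eq_inf' hs x
  rw [hix, hjx]
  exact (le_abs_self _).trans
    (Finset.le_sup' (fun p : ι × ι => |x p.1 - x p.2|) (Finset.mem_product.2 ⟨hi, hj⟩ :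
      (i, j) ∈ s ×ˢ s))

section Weights

variable {ι : Type*} (s : Finset ι) (hs : s.Nonempty) (x α : ι → ℝ)

theorem sum_sum_mul_indicator_Ico_le (hα : ∑ i ∈ s, α i = 1) (t : ℝ) :
    ∑ i ∈ s, ∑ j ∈ s, α i * α j * (Ico (min (x i) (x j)) (max (x i) (x j))).indicator 1 t ≤
      (Ico (s.inf' hs x) (s.sup' hs x)).indicator (fun _ => 1 / 2) t := by
  set u : ι → ℝ := fun i => (Ici (x i)).indicator 1 t with hu
  have hu_apply : ∀ i, (Ici (x i)).indicator 1 t = u i := fun _ => rfl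
  simp only [← indicator_Ici_sub_indicator_Ici_sq, hu_apply]
  by_cases ht : t ∈ Ico (s.inf' hs x) (s.sup' hs x)
  · have hu_sq : ∀ i, u i ^ 2 = u i := fun i => by
      by_cases h : x i ≤ t <;> simp [hu, indicator, h]
    rw [indicator_of_mem ht, Finset.sum_sum_mul_mul_sub_sq, hα]
    simp only [hu_sq, one_mul]
    nlinarith [sq_nonneg (2 * ∑ i ∈ s, α i * u i - 1)]
  · suffices ∃ c, ∀ i ∈ s, u i = c by
      obtain ⟨c, hc⟩ := this
      rw [indicator_of_notMem ht]
      refine (Finset.sum_eq_zero fun i hi => Finset.sum_eq_zero fun j hj => ?_).le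
      simp [hc i hi, hc j hj]
    rcases not_and_or.1 ht with hlt | hge
    · refine ⟨0, fun i hi => ?_⟩
      have : t < x i := (not_le.1 hlt).trans_le (s.inf'_le x hi)
      simp [hu, indicator, this.not_ge]
    · refine ⟨1, fun i hi => ?_⟩
      have : x i ≤ t := (s.le_sup' x hi).trans (not_lt.1 hge)
      simp [hu, indicator, this]

theorem sum_sum_mul_abs_sub_le (hα : ∑ i ∈ s, α i = 1) :
    ∑ i ∈ s, ∑ j ∈ s, α i * α j * |x i - x j| ≤ 1 / 2 * (s.sup' hs x - s.inf' hs x) := by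
  have hint : ∀ i j,
      Integrable ((Ico (min (x i) (x j)) (max (x i) (x j))).indicator (1 : ℝ → ℝ)) :=
    fun i j => integrable_indicator_Ico_const _ _ 1
  have hinf_le_sup : s.inf' hs x ≤ s.sup' hs x :=
    let ⟨_, hi⟩ := hs
    (s.inf'_le x hi).trans (s.le_sup' x hi)
  calc ∑ i ∈ s, ∑ j ∈ s, α i * α j * |x i - x j|
      = ∫ t, ∑ i ∈ s, ∑ j ∈ s,
          α i * α j * (Ico (min (x i) (x j)) (max (x i) (x j))).indicator 1 t := by
        rw [integral_finsetSum s fun i _ =>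
          integrable_finsetSum s fun j _ => (hint i j).const_mul _]
        refine Finset.sum_congr rfl fun i _ => ?_
        rw [integral_finsetSum s fun j _ => (hint i j).const_mul _]
        simp only [integral_const_mul, integral_indicator_Ico_min_max]
    _ ≤ ∫ t, (Ico (s.inf' hs x) (s.sup' hs x)).indicator (fun _ => 1 / 2) t :=
        integral_mono (integrable_finsetSum s fun i _ => integrable_finsetSum s fun j _ =>
            (hint i j).const_mul _)
          (integrable_indicator_Ico_const _ _ _) (sum_sum_mul_indicator_Ico_le s hs x α hα)
    _ = 1 / 2 * (s.sup' hs x - s.inf' hs x) := by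
        rw [integral_indicator_const _ measurableSet_Ico,
          Real.volume_real_Ico_of_le hinf_le_sup, smul_eq_mul, mul_comm]

end Weights

theorem stmt_1 (n : ℕ) (hn : 1 ≤ n) (x α : ℕ → ℝ)
    (hsum : ∑ i ∈ Finset.Icc 1 n, α i = 1) :
    ∑ i ∈ Finset.Icc 1 n, ∑ j ∈ Finset.Icc 1 n, α i * α j * |x i - x j| ≤
      (1 / 2) *
        ((Finset.Icc 1 n ×ˢ Finset.Icc 1 n).sup'
          ((Finset.nonempty_Icc.mpr hn).product (Finset.nonempty_Icc.mpr hn))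
          fun p => |x p.1 - x p.2|) := by
  have hs : (Finset.Icc 1 n).Nonempty := Finset.nonempty_Icc.mpr hn
  calc _ ≤ 1 / 2 * ((Finset.Icc 1 n).sup' hs x - (Finset.Icc 1 n).inf' hs x) :=
        sum_sum_mul_abs_sub_le _ hs x α hsum
    _ ≤ _ := by
        gcongr
        exact Finset.sup'_sub_inf'_le_sup'_abs_sub _ hs x
end

section
/- Let n ≥ 1, let x_1 ≤ ... ≤ x_n be real numbers and α_1, ..., α_n real numbers with ∑ α_i = 1. Let r = min{i : α_i ≥ 0} and s = max{i : α_i ≥ 0} (these exist since the α_i sum to 1). Then ∑_{i,j=1}^n α_i α_j |x_i - x_j| ≤ (1/2)(x_s - x_r). -/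
theorem stmt_2 (n : ℕ) (hn : 1 ≤ n) (x α : ℕ → ℝ)
    (hmono : ∀ i j, 1 ≤ i → i ≤ j → j ≤ n → x i ≤ x j)
    (hsum : ∑ i ∈ Finset.Icc 1 n, α i = 1)
    (r s : ℕ) (hr : r ∈ Finset.Icc 1 n) (hs : s ∈ Finset.Icc 1 n)
    (hrnn : 0 ≤ α r) (hsnn : 0 ≤ α s)
    (hrmin : ∀ i ∈ Finset.Icc 1 n, 0 ≤ α i → r ≤ i)
    (hsmax : ∀ i ∈ Finset.Icc 1 n, 0 ≤ α i → i ≤ s) :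
    ∑ i ∈ Finset.Icc 1 n, ∑ j ∈ Finset.Icc 1 n, α i * α j * |x i - x j| ≤
      (1 / 2) * (x s - x r) := by
  set I := Finset.Icc 1 n with hI
  set d : ℕ → ℝ := fun k => x (k+1) - x k with hdd
  set c : ℕ → ℕ → ℝ := fun i k => if i ≤ k then 1 else 0 with hcc
  have hrs : r ≤ s := hrmin s hs hsnn
  have hr1 : 1 ≤ r := (Finset.mem_Icc.mp hr).1
  have hsn : s ≤ n := (Finset.mem_Icc.mp hs).2
  have tele : ∀ a b : ℕ, a ≤ b → ∑ k ∈ Finset.Ico a b, d k = x b - x a := by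
    intro a b hab
    rw [Finset.sum_Ico_eq_sub _ hab]
    simp only [hdd]
    rw [Finset.sum_range_sub (fun i => x i), Finset.sum_range_sub (fun i => x i)]
    ring
  have hcsq : ∀ i k, c i k * c i k = c i k := by
    intro i k; simp only [hcc]; split_ifs <;> ring
  have key0 : ∀ i j, i ∈ I → j ∈ I → i ≤ j →
      |x i - x j| = ∑ k ∈ Finset.Icc 1 (n-1), d k * (c i k - c j k)^2 := by
    intro i j hi hj hij
    obtain ⟨hi1, hin⟩ := Finset.mem_Icc.mp hi
    obtain ⟨hj1, hjn⟩ := Finset.mem_Icc.mp hj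
    have hx : x i ≤ x j := hmono i j hi1 hij hjn
    have habs : |x i - x j| = x j - x i := by
      rw [abs_sub_comm, abs_of_nonneg (by linarith)]
    have hsub : Finset.Ico i j ⊆ Finset.Icc 1 (n-1) := by
      intro k hk
      simp only [Finset.mem_Ico, Finset.mem_Icc] at *
      omega
    have hind : ∀ k ∈ Finset.Icc 1 (n-1),
        d k * (c i k - c j k)^2 = if k ∈ Finset.Ico i j then d k else 0 := by
      intro k _
      by_cases h1 : i ≤ k
      · by_cases h2 : j ≤ k
        · have hmem : k ∉ Finset.Ico i j := by simp [Finset.mem_Ico]; omega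
          simp [hcc, h1, h2, hmem]
        · have hmem : k ∈ Finset.Ico i j := Finset.mem_Ico.mpr ⟨h1, by omega⟩
          simp [hcc, h1, h2, hmem]
      · have h2 : ¬ j ≤ k := by omega
        have hmem : k ∉ Finset.Ico i j := by simp [Finset.mem_Ico]; omega
        simp [hcc, h1, h2, hmem]
    rw [Finset.sum_congr rfl hind, Finset.sum_ite_mem, Finset.inter_eq_right.mpr hsub,
      tele i j hij, habs]
  have key : ∀ i ∈ I, ∀ j ∈ I,
      |x i - x j| = ∑ k ∈ Finset.Icc 1 (n-1), d k * (c i k - c j k)^2 := by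
    intro i hi j hj
    rcases le_total i j with h | h
    · exact key0 i j hi hj h
    · rw [abs_sub_comm, key0 j i hj hi h]
      exact Finset.sum_congr rfl fun k _ => by ring
  have swap : ∑ i ∈ I, ∑ j ∈ I, α i * α j * |x i - x j|
      = ∑ k ∈ Finset.Icc 1 (n-1), d k * (∑ i ∈ I, ∑ j ∈ I, α i * α j * (c i k - c j k)^2) := by
    calc ∑ i ∈ I, ∑ j ∈ I, α i * α j * |x i - x j|
        = ∑ i ∈ I, ∑ j ∈ I, ∑ k ∈ Finset.Icc 1 (n-1),
            α i * α j * (d k * (c i k - c j k)^2) := by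
          refine Finset.sum_congr rfl fun i hi => Finset.sum_congr rfl fun j hj => ?_
          rw [key i hi j hj, Finset.mul_sum]
      _ = ∑ i ∈ I, ∑ k ∈ Finset.Icc 1 (n-1), ∑ j ∈ I,
            α i * α j * (d k * (c i k - c j k)^2) :=
          Finset.sum_congr rfl fun i _ => Finset.sum_comm
      _ = ∑ k ∈ Finset.Icc 1 (n-1), ∑ i ∈ I, ∑ j ∈ I,
            α i * α j * (d k * (c i k - c j k)^2) := Finset.sum_comm
      _ = ∑ k ∈ Finset.Icc 1 (n-1), d k * (∑ i ∈ I, ∑ j ∈ I, α i * α j * (c i k - c j k)^2) := by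
          refine Finset.sum_congr rfl fun k _ => ?_
          rw [Finset.mul_sum]
          refine Finset.sum_congr rfl fun i _ => ?_
          rw [Finset.mul_sum]
          exact Finset.sum_congr rfl fun j _ => by ring
  have inner : ∀ k, ∑ i ∈ I, ∑ j ∈ I, α i * α j * (c i k - c j k)^2
      = 2 * (∑ i ∈ I, α i * c i k) * (1 - ∑ i ∈ I, α i * c i k) := by
    intro k
    set Tk := ∑ i ∈ I, α i * c i k with hTk
    have h1 : ∀ i ∈ I, ∑ j ∈ I, α i * α j * (c i k - c j k)^2
        = α i * c i k - (2 * (α i * c i k)) * Tk + α i * Tk := by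
      intro i _
      have h2 : ∀ j ∈ I, α i * α j * (c i k - c j k)^2
          = (α i * c i k) * α j - (2 * (α i * c i k)) * (α j * c j k) + α i * (α j * c j k) := by
        intro j _
        have hbi := hcsq i k
        have hbj := hcsq j k
        linear_combination (α i * α j) * hbi + (α i * α j) * hbj
      rw [Finset.sum_congr rfl h2, Finset.sum_add_distrib, Finset.sum_sub_distrib,
        ← Finset.mul_sum, ← Finset.mul_sum, ← Finset.mul_sum, hsum]
      ring
    rw [Finset.sum_congr rfl h1, Finset.sum_add_distrib, Finset.sum_sub_distrib,
      ← Finset.sum_mul, ← Finset.sum_mul, ← Finset.mul_sum, hsum]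
    ring
  have hterm : ∀ k ∈ Finset.Icc 1 (n-1),
      d k * (2 * (∑ i ∈ I, α i * c i k) * (1 - ∑ i ∈ I, α i * c i k))
        ≤ if r ≤ k ∧ k < s then (1/2 : ℝ) * d k else 0 := by
    intro k hk
    obtain ⟨hk1, hk2⟩ := Finset.mem_Icc.mp hk
    have hdk : 0 ≤ d k := by
      have := hmono k (k+1) hk1 (Nat.le_succ k) (by omega)
      simp only [hdd]; linarith
    set Tk := ∑ i ∈ I, α i * c i k with hTk
    by_cases hcase : r ≤ k ∧ k < s
    · rw [if_pos hcase]
      have hq : 2 * Tk * (1 - Tk) ≤ 1/2 := by nlinarith [sq_nonneg (Tk - 1/2)]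
      have := mul_le_mul_of_nonneg_left hq hdk
      linarith
    · rw [if_neg hcase]
      have hTsign : Tk * (1 - Tk) ≤ 0 := by
        rcases (by omega : k < r ∨ s ≤ k) with h | h
        · have hT0 : Tk ≤ 0 := by
            rw [hTk]
            apply Finset.sum_nonpos
            intro i hi
            by_cases hik : i ≤ k
            · have hir : ¬ (0 ≤ α i) := fun hpos => by
                have := hrmin i hi hpos; omega
              have : α i < 0 := lt_of_not_ge hir
              simp only [hcc, if_pos hik, mul_one]
              linarith
            · simp [hcc, hik]
          nlinarith
        · have hT1 : 1 ≤ Tk := by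
            have heq : 1 - Tk = ∑ i ∈ I, (α i - α i * c i k) := by
              rw [← hsum, hTk, Finset.sum_sub_distrib]
            have hle : ∑ i ∈ I, (α i - α i * c i k) ≤ 0 := by
              apply Finset.sum_nonpos
              intro i hi
              by_cases hik : i ≤ k
              · simp [hcc, hik]
              · have his : ¬ (0 ≤ α i) := fun hpos => by
                  have := hsmax i hi hpos; omega
                have : α i < 0 := lt_of_not_ge his
                simp only [hcc, if_neg hik, mul_zero]
                linarith
            linarith [heq ▸ hle]
          nlinarith
      have h2 : 2 * Tk * (1 - Tk) ≤ 0 := by nlinarith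
      have := mul_le_mul_of_nonneg_left h2 hdk
      linarith
  calc ∑ i ∈ I, ∑ j ∈ I, α i * α j * |x i - x j|
      = ∑ k ∈ Finset.Icc 1 (n-1),
          d k * (2 * (∑ i ∈ I, α i * c i k) * (1 - ∑ i ∈ I, α i * c i k)) := by
        rw [swap]
        exact Finset.sum_congr rfl fun k _ => by rw [inner k]
    _ ≤ ∑ k ∈ Finset.Icc 1 (n-1), (if r ≤ k ∧ k < s then (1/2 : ℝ) * d k else 0) :=
        Finset.sum_le_sum hterm
    _ = ∑ k ∈ Finset.Ico r s, (1/2 : ℝ) * d k := by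
        rw [← Finset.sum_filter]
        congr 1
        ext k
        simp only [Finset.mem_filter, Finset.mem_Icc, Finset.mem_Ico]
        omega
    _ = (1 / 2) * (x s - x r) := by
        rw [← Finset.mul_sum, tele r s hrs]
end

section
/- Let x_1, ..., x_k be real numbers (k ≥ 1). Then ∑_{1 ≤ i < j ≤ k} |x_i - x_j| ≥ (k - 1) · max_{1 ≤ i,j ≤ k} |x_i - x_j|. -/
theorem stmt_3 (k : ℕ) (hk : 1 ≤ k) (x : ℕ → ℝ) :
    ((k : ℝ) - 1) *
        ((Finset.Icc 1 k ×ˢ Finset.Icc 1 k).sup'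
          ((Finset.nonempty_Icc.mpr hk).product (Finset.nonempty_Icc.mpr hk))
          fun p => |x p.1 - x p.2|) ≤
      ∑ p ∈ (Finset.Icc 1 k ×ˢ Finset.Icc 1 k).filter fun p => p.1 < p.2,
        |x p.1 - x p.2| := by
  classical
  obtain ⟨⟨a, b⟩, habm, hM⟩ := Finset.exists_mem_eq_sup'
    ((Finset.nonempty_Icc.mpr hk).product (Finset.nonempty_Icc.mpr hk))
    (fun p => |x p.1 - x p.2|)
  rw [Finset.mem_product] at habm
  obtain ⟨ha, hb⟩ := habm
  rw [hM]
  by_cases hab' : a = b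
  · rw [hab', sub_self, abs_zero, mul_zero]
    exact Finset.sum_nonneg fun p _ => abs_nonneg _
  set S := Finset.Icc 1 k with hS
  set f : ℕ × ℕ → ℝ := fun p => |x p.1 - x p.2| with hf
  set q : ℕ → ℕ → ℕ × ℕ := fun i j => if i < j then (i, j) else (j, i) with hq
  have hfq : ∀ i j, f (q i j) = |x i - x j| := by
    intro i j
    simp only [hq, hf]
    split_ifs
    · rfl
    · exact abs_sub_comm (x j) (x i)
  have hqmem : ∀ i ∈ S, ∀ j ∈ S, i ≠ j →
      q i j ∈ (S ×ˢ S).filter fun p => p.1 < p.2 := by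
    intro i hi j hj hij
    simp only [hq, Finset.mem_filter, Finset.mem_product]
    split_ifs with h
    · exact ⟨⟨hi, hj⟩, h⟩
    · exact ⟨⟨hj, hi⟩, by omega⟩
  have hinj1 : ∀ m ∈ S.erase a, ∀ m' ∈ S.erase a, q a m = q a m' → m = m' := by
    intro m hm m' hm' h
    have hma : m ≠ a := (Finset.mem_erase.mp hm).1
    have hm'a : m' ≠ a := (Finset.mem_erase.mp hm').1
    simp only [hq] at h
    split_ifs at h <;> injection h with h1 h2 <;> omega
  have hinj2 : ∀ m ∈ S.erase b, ∀ m' ∈ S.erase b, q m b = q m' b → m = m' := by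
    intro m hm m' hm' h
    have hmb : m ≠ b := (Finset.mem_erase.mp hm).1
    have hm'b : m' ≠ b := (Finset.mem_erase.mp hm').1
    simp only [hq] at h
    split_ifs at h <;> injection h with h1 h2 <;> omega
  set T1 := (S.erase a).image (fun m => q a m) with hT1
  set T2 := (S.erase b).image (fun m => q m b) with hT2
  have hsub : T1 ∪ T2 ⊆ (S ×ˢ S).filter fun p => p.1 < p.2 := by
    intro p hp
    rcases Finset.mem_union.mp hp with h | h
    · obtain ⟨m, hm, rfl⟩ := Finset.mem_image.mp h
      exact hqmem a ha m (Finset.mem_of_mem_erase hm) (Ne.symm (Finset.mem_erase.mp hm).1)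
    · obtain ⟨m, hm, rfl⟩ := Finset.mem_image.mp h
      exact hqmem m (Finset.mem_of_mem_erase hm) b hb (Finset.mem_erase.mp hm).1
  have hinter : T1 ∩ T2 = {q a b} := by
    apply Finset.Subset.antisymm
    · intro p hp
      obtain ⟨h1, h2⟩ := Finset.mem_inter.mp hp
      obtain ⟨m, hm, rfl⟩ := Finset.mem_image.mp h1
      obtain ⟨m', hm', he⟩ := Finset.mem_image.mp h2
      have hma : m ≠ a := (Finset.mem_erase.mp hm).1
      have hm'b : m' ≠ b := (Finset.mem_erase.mp hm').1
      have hmb : m = b := by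
        simp only [hq] at he
        split_ifs at he <;> injection he with h1 h2 <;> omega
      rw [Finset.mem_singleton, hmb]
    · intro p hp
      rw [Finset.mem_singleton] at hp
      subst hp
      refine Finset.mem_inter.mpr ⟨?_, ?_⟩
      · exact Finset.mem_image.mpr ⟨b, Finset.mem_erase.mpr ⟨Ne.symm hab', hb⟩, rfl⟩
      · exact Finset.mem_image.mpr ⟨a, Finset.mem_erase.mpr ⟨hab', ha⟩, rfl⟩
  have hs1 : ∑ p ∈ T1, f p = ∑ m ∈ S, |x a - x m| := by
    rw [hT1, Finset.sum_image hinj1]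
    rw [Finset.sum_congr rfl fun m _ => hfq a m]
    exact Finset.sum_erase _ (by simp)
  have hs2 : ∑ p ∈ T2, f p = ∑ m ∈ S, |x m - x b| := by
    rw [hT2, Finset.sum_image hinj2]
    rw [Finset.sum_congr rfl fun m _ => hfq m b]
    exact Finset.sum_erase _ (by simp)
  have hui := Finset.sum_union_inter (s₁ := T1) (s₂ := T2) (f := f)
  rw [hinter, Finset.sum_singleton, hfq] at hui
  have htri : (k : ℝ) * |x a - x b| ≤ ∑ m ∈ S, (|x a - x m| + |x m - x b|) := by
    have h := Finset.card_nsmul_le_sum S (fun m => |x a - x m| + |x m - x b|) (|x a - x b|)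
      (fun m _ => abs_sub_le (x a) (x m) (x b))
    have hcard : S.card = k := by simp [hS]
    rw [hcard, nsmul_eq_mul] at h
    exact h
  have h1 : ∑ p ∈ T1 ∪ T2, f p ≤ ∑ p ∈ (S ×ˢ S).filter (fun p => p.1 < p.2), f p :=
    Finset.sum_le_sum_of_subset_of_nonneg hsub (fun p _ _ => abs_nonneg _)
  have hsplit : ∑ m ∈ S, (|x a - x m| + |x m - x b|)
      = ∑ m ∈ S, |x a - x m| + ∑ m ∈ S, |x m - x b| := Finset.sum_add_distrib
  linarith [htri, hui, h1, hs1, hs2, hsplit]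
end

section
/- Let X = {x_1, ..., x_k} be a finite subset of ℝ^n equipped with the metric induced by the 1-norm ‖·‖₁. Let P_s : ℝ^n → ℝ be the s-th coordinate projection, and for a bounded set A ⊆ ℝ let D(A) denote its diameter. Then ∑_{s=1}^n D(P_s(X)) ≤ (k/2) · D(X), where D(X) is the diameter of X in the 1-norm. -/
/-!
Enumerate `X` as a closed walk `x₀, x₁, …, x_k = x₀`. In every coordinate `s` the walk goes
from a point where `P_s` is minimal to one where it is maximal and back, so `D(P_s(X))` is at
most half the `s`-th coordinate's share of the walk's `ℓ¹`-length. Summing over `s` bounds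
`∑ₛ D(P_s(X))` by half the length of the walk, which has `k` steps of length at most `D(X)`.
-/

open Finset Function

section ClosedWalk

variable {α : Type*} [PseudoMetricSpace α] {g : ℕ → α} {k : ℕ}

theorem two_mul_dist_le_sum_dist_of_periodic (hg : Periodic g k) {a b : ℕ} (hab : a ≤ b)
    (hbk : b ≤ k) :
    2 * dist (g a) (g b) ≤ ∑ i ∈ range k, dist (g i) (g (i + 1)) := by
  have forth := dist_le_Ico_sum_dist g hab
  have back₁ := dist_le_Ico_sum_dist g hbk
  have back₂ := dist_le_Ico_sum_dist g (Nat.zero_le a)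
  have hk : g k = g 0 := hg.eq
  rw [range_eq_Ico, ← sum_Ico_consecutive _ (Nat.zero_le b) hbk,
    ← sum_Ico_consecutive _ (Nat.zero_le a) hab]
  rw [hk] at back₁
  linarith [dist_triangle (g b) (g 0) (g a), dist_comm (g a) (g b), dist_comm (g b) (g 0)]

theorem diam_range_le_of_periodic (hg : Periodic g k) (hk : 0 < k) :
    Metric.diam (Set.range g) ≤ (∑ i ∈ range k, dist (g i) (g (i + 1))) / 2 := by
  refine Metric.diam_le_of_forall_dist_le (by positivity) ?_
  rintro _ ⟨a, rfl⟩ _ ⟨b, rfl⟩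
  rw [← hg.map_mod_nat a, ← hg.map_mod_nat b]
  have ha := (Nat.mod_lt a hk).le
  have hb := (Nat.mod_lt b hk).le
  rcases le_total (a % k) (b % k) with h | h
  · linarith [two_mul_dist_le_sum_dist_of_periodic hg h hb]
  · linarith [two_mul_dist_le_sum_dist_of_periodic hg h ha, dist_comm (g (a % k)) (g (b % k))]

end ClosedWalk

theorem Finset.exists_periodic_range_eq {α : Type*} (X : Finset α) (hX : X.Nonempty) :
    ∃ g : ℕ → α, Periodic g #X ∧ Set.range g = X := by
  have hk : 0 < #X := hX.card_pos
  refine ⟨fun m => X.equivFin.symm ⟨m % #X, Nat.mod_lt m hk⟩, fun m => by simp, ?_⟩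
  ext x
  constructor
  · rintro ⟨m, rfl⟩
    exact Subtype.prop _
  · intro hx
    refine ⟨X.equivFin ⟨x, hx⟩, ?_⟩
    simp [Nat.mod_eq_of_lt (X.equivFin ⟨x, hx⟩).isLt]

theorem stmt_4 (n : ℕ) (X : Finset (PiLp 1 fun _ : Fin n => ℝ)) :
    ∑ s : Fin n, Metric.diam ((fun v => v s) '' (X : Set (PiLp 1 fun _ : Fin n => ℝ))) ≤
      ((X.card : ℝ) / 2) * Metric.diam (X : Set (PiLp 1 fun _ : Fin n => ℝ)) := by
  rcases X.eq_empty_or_nonempty with rfl | hX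
  · simp
  obtain ⟨g, hg, hrange⟩ := X.exists_periodic_range_eq hX
  have hk := hX.card_pos
  have hcoord (s : Fin n) : (fun v => v s) '' (X : Set (PiLp 1 fun _ : Fin n => ℝ)) =
      Set.range fun m => g m s := by
    rw [← hrange, ← Set.range_comp]; rfl
  calc ∑ s : Fin n, Metric.diam ((fun v => v s) '' (X : Set (PiLp 1 fun _ : Fin n => ℝ)))
      ≤ ∑ s : Fin n, (∑ i ∈ range #X, dist (g i s) (g (i + 1) s)) / 2 := by
        gcongr with s
        rw [hcoord]
        exact diam_range_le_of_periodic (fun m => by simp only [hg m]) hk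
    _ = (∑ i ∈ range #X, dist (g i) (g (i + 1))) / 2 := by
        simp_rw [← sum_div, PiLp.dist_eq_of_L1]
        rw [sum_comm]
    _ ≤ (∑ _i ∈ range #X, Metric.diam (X : Set (PiLp 1 fun _ : Fin n => ℝ))) / 2 := by
        gcongr with i
        have hmem (m : ℕ) : g m ∈ (X : Set (PiLp 1 fun _ : Fin n => ℝ)) := hrange ▸ ⟨m, rfl⟩
        exact Metric.dist_le_diam_of_mem X.finite_toSet.isBounded (hmem i) (hmem (i + 1))
    _ = ((X.card : ℝ) / 2) * Metric.diam (X : Set (PiLp 1 fun _ : Fin n => ℝ)) := by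
        rw [sum_const, card_range, nsmul_eq_mul]
        ring
end

section
/- Let x_1, ..., x_k ∈ ℝ^n and α_1, ..., α_k ∈ ℝ with ∑_{i=1}^k α_i = 1. Then ∑_{i,j=1}^k α_i α_j ‖x_i - x_j‖₁ ≤ (n/2) · D, where D = max_{1 ≤ i,j ≤ k} ‖x_i - x_j‖₁. -/
/-! The 1-norm splits into coordinates, so it suffices to bound `∑ α i α j |y i - y j|` for reals
with `|y i - y j| ≤ d`. Writing `|a - b| = ∫ |1[a ≤ t] - 1[b ≤ t]| dt`, the integrand at `t` equals
`2 S (1 - S) ≤ 1 / 2` with `S = ∑_{y i ≤ t} α i`, and it vanishes outside an interval of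
length `d`. -/

open MeasureTheory Set Finset

lemma abs_indicator_Ici_sub_indicator_Ici (a b : ℝ) :
    (fun t => |(Ici a).indicator (1 : ℝ → ℝ) t - (Ici b).indicator 1 t|) =
      (Ico (min a b) (max a b)).indicator 1 := by
  funext t
  rcases lt_or_ge t a with ha | ha <;> rcases lt_or_ge t b with hb | hb <;>
    simp_all [not_le.2]

lemma integrable_abs_indicator_Ici_sub_indicator_Ici (a b : ℝ) :
    Integrable fun t => |(Ici a).indicator (1 : ℝ → ℝ) t - (Ici b).indicator 1 t| := by
  rw [abs_indicator_Ici_sub_indicator_Ici, integrable_indicator_iff measurableSet_Ico]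
  exact integrableOn_const measure_Ico_lt_top.ne

lemma integral_abs_indicator_Ici_sub_indicator_Ici (a b : ℝ) :
    ∫ t, |(Ici a).indicator (1 : ℝ → ℝ) t - (Ici b).indicator 1 t| = |a - b| := by
  rw [abs_indicator_Ici_sub_indicator_Ici, integral_indicator_one measurableSet_Ico,
    measureReal_def, Real.volume_Ico, ENNReal.toReal_ofReal (by simp), max_sub_min_eq_abs,
    abs_sub_comm]

lemma sum_mul_mul_abs_sub_le_half_of_zero_one {ι : Type*} [Fintype ι] (α f : ι → ℝ)
    (hsum : ∑ i, α i = 1) (hf : ∀ i, f i = 0 ∨ f i = 1) :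
    ∑ i, ∑ j, α i * α j * |f i - f j| ≤ 1 / 2 := by
  set S := ∑ i, α i * f i
  have habs : ∀ i j, |f i - f j| = f i + f j - 2 * (f i * f j) := by
    intro i j
    rcases hf i with hi | hi <;> rcases hf j with hj | hj <;> norm_num [hi, hj]
  have hterm : ∀ i j, α i * α j * |f i - f j| =
      α i * f i * α j + α i * (α j * f j) - 2 * (α i * f i) * (α j * f j) := by
    intro i j
    rw [habs]
    ring
  have : ∑ i, ∑ j, α i * α j * |f i - f j| = 2 * S - 2 * S ^ 2 := by
    simp only [hterm, sum_sub_distrib, sum_add_distrib, ← mul_sum, ← sum_mul, hsum]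
    ring
  nlinarith [sq_nonneg (S - 1 / 2)]

lemma sum_mul_mul_abs_indicator_Ici_sub_le {ι : Type*} [Fintype ι] (α y : ι → ℝ)
    (hsum : ∑ i, α i = 1) {a b : ℝ} (hy : ∀ i, y i ∈ Icc a b) (t : ℝ) :
    ∑ i, ∑ j, α i * α j * |(Ici (y i)).indicator (1 : ℝ → ℝ) t - (Ici (y j)).indicator 1 t| ≤
      (Ico a b).indicator (fun _ => 1 / 2) t := by
  by_cases ht : t ∈ Ico a b
  · rw [indicator_of_mem ht]
    refine sum_mul_mul_abs_sub_le_half_of_zero_one α _ hsum fun i => ?_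
    by_cases h : t ∈ Ici (y i) <;> simp [h]
  · rw [indicator_of_notMem ht]
    rcases not_and_or.1 ht with ht | ht
    · have hlt : ∀ i, t < y i := fun i => (lt_of_not_ge ht).trans_le (hy i).1
      simp [indicator_of_notMem, hlt]
    · have hle : ∀ i, y i ≤ t := fun i => (hy i).2.trans (not_lt.1 ht)
      simp [indicator_of_mem, hle]

lemma sum_mul_mul_abs_sub_le_half {ι : Type*} [Fintype ι] (α y : ι → ℝ) (hsum : ∑ i, α i = 1)
    {d : ℝ} (hd : ∀ i j, |y i - y j| ≤ d) :
    ∑ i, ∑ j, α i * α j * |y i - y j| ≤ d / 2 := by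
  have : Nonempty ι := by
    by_contra h
    simp [not_nonempty_iff.1 h] at hsum
  obtain ⟨i₀, hi₀⟩ := Finite.exists_min y
  set s : ι → ℝ → ℝ := fun i => (Ici (y i)).indicator 1
  have hs : ∀ i j, Integrable fun t => α i * α j * |s i t - s j t| := fun i j =>
    (integrable_abs_indicator_Ici_sub_indicator_Ici (y i) (y j)).const_mul _
  have hlayer : ∑ i, ∑ j, α i * α j * |y i - y j| =
      ∫ t, ∑ i, ∑ j, α i * α j * |s i t - s j t| := by
    rw [integral_finsetSum _ fun i _ => integrable_finsetSum _ fun j _ => hs i j]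
    refine sum_congr rfl fun i _ => ?_
    rw [integral_finsetSum _ fun j _ => hs i j]
    refine sum_congr rfl fun j _ => ?_
    rw [integral_const_mul, integral_abs_indicator_Ici_sub_indicator_Ici]
  have hy : ∀ i, y i ∈ Icc (y i₀) (y i₀ + d) := fun i =>
    ⟨hi₀ i, by linarith [le_abs_self (y i - y i₀), hd i i₀]⟩
  have hd₀ : 0 ≤ d := (abs_nonneg _).trans (hd i₀ i₀)
  calc ∑ i, ∑ j, α i * α j * |y i - y j|
      ≤ ∫ t, (Ico (y i₀) (y i₀ + d)).indicator (fun _ => (1 : ℝ) / 2) t := by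
        rw [hlayer]
        refine integral_mono (integrable_finsetSum _ fun i _ => integrable_finsetSum _
          fun j _ => hs i j) ?_ (sum_mul_mul_abs_indicator_Ici_sub_le α y hsum hy)
        exact (integrable_indicator_iff measurableSet_Ico).2
          (integrableOn_const measure_Ico_lt_top.ne)
    _ = d / 2 := by
        rw [integral_indicator_const _ measurableSet_Ico, measureReal_def, Real.volume_Ico,
          add_sub_cancel_left, ENNReal.toReal_ofReal hd₀, smul_eq_mul]
        ring

lemma sum_mul_mul_norm_sub_le {ι κ : Type*} [Fintype ι] [Fintype κ]
    (x : κ → PiLp 1 fun _ : ι => ℝ) (α : κ → ℝ) (hsum : ∑ i, α i = 1)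
    {d : ℝ} (hd : ∀ i j, ‖x i - x j‖ ≤ d) :
    ∑ i, ∑ j, α i * α j * ‖x i - x j‖ ≤ (Fintype.card ι : ℝ) / 2 * d := by
  have hcoord : ∀ c i j, |x i c - x j c| ≤ d := fun c i j =>
    (PiLp.norm_apply_le (x i - x j) c).trans (hd i j)
  calc ∑ i, ∑ j, α i * α j * ‖x i - x j‖
      = ∑ c, ∑ i, ∑ j, α i * α j * |x i c - x j c| := by
        simp only [PiLp.norm_eq_of_L1, Real.norm_eq_abs, PiLp.sub_apply, mul_sum]
        exact (sum_congr rfl fun i _ => sum_comm).trans sum_comm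
    _ ≤ ∑ _c : ι, d / 2 :=
        sum_le_sum fun c _ => sum_mul_mul_abs_sub_le_half α (x · c) hsum (hcoord c)
    _ = (Fintype.card ι : ℝ) / 2 * d := by
        rw [sum_const, nsmul_eq_mul, Finset.card_univ]
        ring

theorem stmt_6 (n k : ℕ) (x : Fin k → PiLp 1 fun _ : Fin n => ℝ) (α : Fin k → ℝ)
    (hsum : ∑ i, α i = 1) :
    ∑ i, ∑ j, α i * α j * ‖x i - x j‖ ≤
      ((n : ℝ) / 2) * Metric.diam (Set.range x) := by
  have hdiam : ∀ i j, ‖x i - x j‖ ≤ Metric.diam (Set.range x) := fun i j =>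
    dist_eq_norm (x i) (x j) ▸ Metric.dist_le_diam_of_mem (finite_range x).isBounded
      (mem_range_self i) (mem_range_self j)
  simpa using sum_mul_mul_norm_sub_le x α hsum hdiam
end

section
/- Let X ⊆ ℝ^n be a finite set with |X| = k, with the metric induced by the 1-norm. For any real coefficients α_x (x ∈ X) with ∑_x α_x = 1, one has ∑_{x,y ∈ X} α_x α_y ‖x - y‖₁ ≤ (k/4) · D(X), where D(X) is the diameter of X. -/
open Finset

/-!
For weights `α` with `∑ α = 1` (possibly negative), the quantity `∑ α_x α_y |f x - f y|` splits
additively when `f` is cut at a threshold into `min f t` and `max f t`. Cutting at each value of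
`f` in turn reduces it to two-valued functions, for which it equals `2 s (1 - s)` times the gap,
with `s` the weight of the upper value; since `2 s (1 - s) ≤ 1/2`, it is at most half the range
of `f`. In `ℓ¹` the left-hand side is the sum of these quantities over the coordinates. Listing
`X` in a cyclic order, the closed tour passes through the minimum and the maximum of every
coordinate, so its `ℓ¹`-length is at least twice the sum of the coordinate ranges; it has `k`
steps, each of length at most `D(X)`.
-/

theorem nonempty_of_sum_eq_one {ι : Type*} {S : Finset ι} {α : ι → ℝ}
    (hsum : ∑ x ∈ S, α x = 1) : S.Nonempty :=
  nonempty_of_sum_ne_zero (f := α) (by simp [hsum])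

noncomputable def giniMeanDiff {ι : Type*} (S : Finset ι) (α f : ι → ℝ) : ℝ :=
  ∑ x ∈ S, ∑ y ∈ S, α x * α y * |f x - f y|

theorem abs_sub_eq_abs_min_sub_min_add_abs_max_sub_max (a b t : ℝ) :
    |a - b| = |min a t - min b t| + |max a t - max b t| := by
  grind

open Fin.NatCast in
theorem two_mul_dist_le_sum_dist_cycle {E : Type*} [PseudoMetricSpace E] {k : ℕ} [NeZero k]
    (p : Fin k → E) (i j : Fin k) : 2 * dist (p i) (p j) ≤ ∑ m, dist (p m) (p (m + 1)) := by
  let q : ℕ → E := fun m => p (i + (m : Fin k))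
  set t : ℕ := (j - i : Fin k).val
  have ht : t ≤ k := (Fin.is_lt _).le
  have hq0 : q 0 = p i := by simp [q]
  have hqk : q k = p i := by simp [q]
  have hqt : q t = p j := by simp [q, t]
  have hsum : ∑ m ∈ range k, dist (q m) (q (m + 1)) = ∑ m, dist (p m) (p (m + 1)) := by
    rw [← Fin.sum_univ_eq_sum_range (fun m => dist (q m) (q (m + 1))),
      ← Equiv.sum_comp (Equiv.addLeft i) (fun m => dist (p m) (p (m + 1)))]
    simp [q, add_assoc]
  calc 2 * dist (p i) (p j) = dist (q 0) (q t) + dist (q t) (q k) := by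
        rw [hq0, hqt, hqk, dist_comm (p j)]; ring
    _ ≤ ∑ m ∈ Ico 0 t, dist (q m) (q (m + 1)) + ∑ m ∈ Ico t k, dist (q m) (q (m + 1)) :=
        add_le_add (dist_le_Ico_sum_dist q (Nat.zero_le _)) (dist_le_Ico_sum_dist q ht)
    _ = ∑ m, dist (p m) (p (m + 1)) := by
        rw [sum_Ico_consecutive _ (Nat.zero_le _) ht, ← range_eq_Ico, hsum]

section GiniMeanDiff

variable {ι : Type*} {S : Finset ι} {α : ι → ℝ}

theorem giniMeanDiff_eq_min_add_max (f : ι → ℝ) (t : ℝ) :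
    giniMeanDiff S α f =
      giniMeanDiff S α (fun x => min (f x) t) + giniMeanDiff S α (fun x => max (f x) t) := by
  simp only [giniMeanDiff, ← sum_add_distrib, ← mul_add,
    ← abs_sub_eq_abs_min_sub_min_add_abs_max_sub_max]

theorem sum_sum_mul_cross_eq (hsum : ∑ x ∈ S, α x = 1) (L : ι → ℝ) :
    ∑ x ∈ S, ∑ y ∈ S, α x * α y * (L x * (1 - L y) + (1 - L x) * L y) =
      2 * (∑ x ∈ S, α x * L x) * (1 - ∑ x ∈ S, α x * L x) := by
  have hcompl : ∑ x ∈ S, α x * (1 - L x) = 1 - ∑ x ∈ S, α x * L x := by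
    simp only [mul_sub, mul_one, sum_sub_distrib, hsum]
  rw [← hcompl, mul_assoc, two_mul]
  nth_rw 2 [mul_comm]
  simp only [sum_mul_sum, ← sum_add_distrib]
  exact sum_congr rfl fun x _ => sum_congr rfl fun y _ => by ring

theorem giniMeanDiff_le_of_two_valued (hsum : ∑ x ∈ S, α x = 1) {f : ι → ℝ} {a b : ℝ}
    (hab : a ≤ b) (hf : ∀ x ∈ S, f x = a ∨ f x = b) : giniMeanDiff S α f ≤ (b - a) / 2 := by
  classical
  rcases hab.eq_or_lt with rfl | hab
  · have hf : ∀ x ∈ S, f x = a := fun x hx => (hf x hx).elim id id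
    simp +contextual [giniMeanDiff, hf]
  set L : ι → ℝ := fun x => if f x = b then 1 else 0
  set s := ∑ x ∈ S, α x * L x
  have hcross : ∀ x ∈ S, ∀ y ∈ S,
      α x * α y * |f x - f y| = (b - a) * (α x * α y * (L x * (1 - L y) + (1 - L x) * L y)) := by
    intro x hx y hy
    rcases hf x hx with hx | hx <;> rcases hf y hy with hy | hy <;>
      simp [L, hx, hy, hab.ne, abs_sub_comm a b, abs_of_pos (sub_pos.2 hab), mul_comm]
  calc giniMeanDiff S α f = (b - a) * (2 * s * (1 - s)) := by
        rw [giniMeanDiff, ← sum_sum_mul_cross_eq hsum L, mul_sum]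
        exact sum_congr rfl fun x hx => by rw [mul_sum]; exact sum_congr rfl (hcross x hx)
    _ ≤ (b - a) * (1 / 2) := by gcongr; nlinarith [sq_nonneg (2 * s - 1)]
    _ = (b - a) / 2 := by ring

/-- The lower bound `a` is itself an admissible value, so that the induction step, which cuts at
the least element `w` of the value set, can raise the lower bound to `w`. -/
theorem giniMeanDiff_le_of_mem_insert (hsum : ∑ x ∈ S, α x = 1) (V : Finset ℝ) {a b : ℝ}
    {f : ι → ℝ} (hab : a ≤ b) (hV : ∀ v ∈ V, v ∈ Set.Icc a b) (hf : ∀ x ∈ S, f x ∈ insert a V) :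
    giniMeanDiff S α f ≤ (b - a) / 2 := by
  classical
  induction V using Finset.induction_on_min generalizing a b f with
  | empty =>
    exact giniMeanDiff_le_of_two_valued hsum hab fun x hx => Or.inl (by simpa using hf x hx)
  | insert w V hw ih =>
    obtain ⟨haw, hwb⟩ := hV w (mem_insert_self w V)
    have hval : ∀ x ∈ S, f x = a ∨ f x = w ∨ (w < f x ∧ f x ∈ V) := fun x hx => by
      rcases mem_insert.1 (hf x hx) with h | h
      · exact Or.inl h
      rcases mem_insert.1 h with h | h
      exacts [Or.inr (Or.inl h), Or.inr (Or.inr ⟨hw _ h, h⟩)]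
    have hmin : giniMeanDiff S α (fun x => min (f x) w) ≤ (w - a) / 2 :=
      giniMeanDiff_le_of_two_valued hsum haw fun x hx => by
        rcases hval x hx with h | h | ⟨h, -⟩ <;> simp [h, haw, h.le]
    have hmax : giniMeanDiff S α (fun x => max (f x) w) ≤ (b - w) / 2 := by
      refine ih hwb (fun v hv => ⟨(hw v hv).le, (hV v (mem_insert_of_mem hv)).2⟩) fun x hx => ?_
      rcases hval x hx with h | h | ⟨h, hV⟩ <;> simp [h, haw, h.le, hV]
    rw [giniMeanDiff_eq_min_add_max f w]
    linarith

theorem giniMeanDiff_le_half_sub (hsum : ∑ x ∈ S, α x = 1) {f : ι → ℝ} {a b : ℝ}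
    (hf : ∀ x ∈ S, f x ∈ Set.Icc a b) : giniMeanDiff S α f ≤ (b - a) / 2 := by
  classical
  obtain ⟨x, hx⟩ := nonempty_of_sum_eq_one hsum
  exact giniMeanDiff_le_of_mem_insert hsum (S.image f) ((hf x hx).1.trans (hf x hx).2)
    (by simpa using hf) fun y hy => mem_insert_of_mem (mem_image_of_mem f hy)

theorem giniMeanDiff_le_sum_abs_cycle_div_four (hsum : ∑ x ∈ S, α x = 1) (f : ι → ℝ) {k : ℕ}
    [NeZero k] (p : Fin k → ι) (hp : ∀ x ∈ S, ∃ j, p j = x) :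
    giniMeanDiff S α f ≤ (∑ j, |f (p j) - f (p (j + 1))|) / 4 := by
  have hS : S.Nonempty := nonempty_of_sum_eq_one hsum
  obtain ⟨xmax, hxmax, hmax⟩ := S.exists_max_image f hS
  obtain ⟨xmin, hxmin, hmin⟩ := S.exists_min_image f hS
  obtain ⟨i, rfl⟩ := hp xmin hxmin
  obtain ⟨j, rfl⟩ := hp xmax hxmax
  have hhalf := giniMeanDiff_le_half_sub hsum fun x hx => ⟨hmin x hx, hmax x hx⟩
  have hcycle := two_mul_dist_le_sum_dist_cycle (f ∘ p) i j
  simp only [Function.comp_apply, Real.dist_eq] at hcycle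
  have := neg_abs_le (f (p i) - f (p j))
  linarith

end GiniMeanDiff

theorem sum_sum_mul_norm_sub_eq_sum_giniMeanDiff {κ : Type*} [Fintype κ]
    (X : Finset (PiLp 1 fun _ : κ => ℝ)) (α : (PiLp 1 fun _ : κ => ℝ) → ℝ) :
    ∑ x ∈ X, ∑ y ∈ X, α x * α y * ‖x - y‖ = ∑ i : κ, giniMeanDiff X α (fun x => x i) := by
  simp only [giniMeanDiff, PiLp.norm_eq_of_L1, PiLp.sub_apply, Real.norm_eq_abs, mul_sum]
  exact (sum_congr rfl fun x _ => sum_comm).trans sum_comm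

theorem stmt_7 (n : ℕ) (X : Finset (PiLp 1 fun _ : Fin n => ℝ))
    (α : (PiLp 1 fun _ : Fin n => ℝ) → ℝ)
    (hsum : ∑ x ∈ X, α x = 1) :
    ∑ x ∈ X, ∑ y ∈ X, α x * α y * ‖x - y‖ ≤
      ((X.card : ℝ) / 4) * Metric.diam (X : Set (PiLp 1 fun _ : Fin n => ℝ)) := by
  have : NeZero X.card := ⟨(nonempty_of_sum_eq_one hsum).card_pos.ne'⟩
  set p : Fin X.card → PiLp 1 (fun _ : Fin n => ℝ) := fun j => X.equivFin.symm j
  have hpX : ∀ j, p j ∈ X := fun j => (X.equivFin.symm j).2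
  have hp : ∀ x ∈ X, ∃ j, p j = x := fun x hx => ⟨X.equivFin ⟨x, hx⟩, by simp [p]⟩
  calc ∑ x ∈ X, ∑ y ∈ X, α x * α y * ‖x - y‖ = ∑ i, giniMeanDiff X α (fun x => x i) :=
        sum_sum_mul_norm_sub_eq_sum_giniMeanDiff X α
    _ ≤ ∑ i, (∑ j, |p j i - p (j + 1) i|) / 4 :=
        sum_le_sum fun i _ => giniMeanDiff_le_sum_abs_cycle_div_four hsum _ p hp
    _ = (∑ j, ‖p j - p (j + 1)‖) / 4 := by
        simp only [← sum_div, PiLp.norm_eq_of_L1, PiLp.sub_apply, Real.norm_eq_abs]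
        rw [sum_comm]
    _ ≤ (∑ _j : Fin X.card, Metric.diam (X : Set (PiLp 1 fun _ : Fin n => ℝ))) / 4 := by
        gcongr with j
        rw [← dist_eq_norm]
        exact Metric.dist_le_diam_of_mem X.finite_toSet.isBounded (hpX j) (hpX _)
    _ = _ := by simp only [sum_const, card_univ, Fintype.card_fin, nsmul_eq_mul]; ring
end

section
/- Let n ≥ 2 and let X_n = {±e_1, ..., ±e_n, 0} ⊆ ℝ^n with the 1-norm metric, where e_i are the standard unit vectors. Define the signed measure μ_n = (1/2)∑_{i=1}^n (δ_{e_i} + δ_{-e_i}) - (n-1)δ_0. Then μ_n has total mass 1 and d_{μ_n}(x) = ∑_{y} μ_n({y}) ‖x - y‖₁ = n for every x ∈ X_n. -/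
theorem stmt_11 (n : ℕ) (hn : 2 ≤ n)
    (p : Fin n ⊕ Fin n ⊕ Unit → PiLp 1 fun _ : Fin n => ℝ)
    (hp1 : ∀ i, p (Sum.inl i) = (WithLp.equiv 1 (∀ _ : Fin n, ℝ)).symm (Pi.single i 1))
    (hp2 : ∀ i, p (Sum.inr (Sum.inl i)) = -(WithLp.equiv 1 (∀ _ : Fin n, ℝ)).symm (Pi.single i 1))
    (hp3 : p (Sum.inr (Sum.inr ())) = 0)
    (w : Fin n ⊕ Fin n ⊕ Unit → ℝ)
    (hw1 : ∀ i, w (Sum.inl i) = 1 / 2)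
    (hw2 : ∀ i, w (Sum.inr (Sum.inl i)) = 1 / 2)
    (hw3 : w (Sum.inr (Sum.inr ())) = -((n : ℝ) - 1)) :
    ∑ i, w i = 1 ∧ ∀ j, ∑ i, w i * ‖p j - p i‖ = n := by
  have hnorm : ∀ x : PiLp 1 fun _ : Fin n => ℝ, ‖x‖ = ∑ k, |x k| := by
    intro x
    rw [PiLp.norm_eq_sum (by norm_num)]
    simp [Real.norm_eq_abs]
  have happ : ∀ (i : Fin n) (k : Fin n),
      ((WithLp.equiv 1 (∀ _ : Fin n, ℝ)).symm (Pi.single i 1)) k = if k = i then 1 else 0 := by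
    intro i k
    simp [Pi.single_apply]
  have hee : ∀ i j : Fin n, ‖p (Sum.inl j) - p (Sum.inl i)‖ = if i = j then 0 else 2 := by
    intro i j
    rw [hp1, hp1, hnorm]
    by_cases h : i = j
    · simp [h]
    · rw [Finset.sum_congr rfl
        (g := fun k => (if k = j then (1:ℝ) else 0) + (if k = i then 1 else 0))]
      · rw [Finset.sum_add_distrib]
        simp [Finset.sum_ite_eq', h]
        norm_num
      · intro k _
        simp only [PiLp.sub_apply, happ]
        rcases eq_or_ne k j with rfl | hkj
        · simp [h, Ne.symm h]
        · rcases eq_or_ne k i with rfl | hki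
          · simp [hkj]
          · simp [hkj, hki]
  have hmm : ∀ i j : Fin n,
      ‖p (Sum.inr (Sum.inl j)) - p (Sum.inr (Sum.inl i))‖ = if i = j then 0 else 2 := by
    intro i j
    rw [hp2, hp2, neg_sub_neg, ← hp1, ← hp1, hee j i]
    simp [eq_comm]
  have hem : ∀ i j : Fin n, ‖p (Sum.inl j) - p (Sum.inr (Sum.inl i))‖ = 2 := by
    intro i j
    rw [hp1, hp2, sub_neg_eq_add, hnorm]
    rw [Finset.sum_congr rfl
      (g := fun k => (if k = j then (1:ℝ) else 0) + (if k = i then 1 else 0))]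
    · rw [Finset.sum_add_distrib]
      simp [Finset.sum_ite_eq']
      norm_num
    · intro k _
      simp only [PiLp.add_apply, happ]
      rcases eq_or_ne k j with rfl | hkj <;> rcases eq_or_ne k i with h' | hki <;>
        simp_all <;> norm_num
  have hme : ∀ i j : Fin n, ‖p (Sum.inr (Sum.inl j)) - p (Sum.inl i)‖ = 2 := by
    intro i j
    rw [← neg_sub, norm_neg, hem]
  have he0 : ∀ j : Fin n, ‖p (Sum.inl j) - p (Sum.inr (Sum.inr ()))‖ = 1 := by
    intro j
    rw [hp1, hp3, sub_zero, hnorm]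
    have : ∀ k : Fin n, |((WithLp.equiv 1 (∀ _ : Fin n, ℝ)).symm (Pi.single j 1)) k|
        = if k = j then 1 else 0 := by
      intro k; rw [happ]; split <;> simp
    simp only [this]
    simp [Finset.sum_ite_eq']
  have hm0 : ∀ j : Fin n, ‖p (Sum.inr (Sum.inl j)) - p (Sum.inr (Sum.inr ()))‖ = 1 := by
    intro j
    rw [hp2, hp3, sub_zero, norm_neg,
      ← sub_zero ((WithLp.equiv 1 (∀ _ : Fin n, ℝ)).symm (Pi.single j 1)), ← hp3, ← hp1, he0]
  have h0e : ∀ i : Fin n, ‖p (Sum.inr (Sum.inr ())) - p (Sum.inl i)‖ = 1 := by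
    intro i; rw [← neg_sub, norm_neg, he0]
  have h0m : ∀ i : Fin n, ‖p (Sum.inr (Sum.inr ())) - p (Sum.inr (Sum.inl i))‖ = 1 := by
    intro i; rw [← neg_sub, norm_neg, hm0]
  have hsum : ∀ j : Fin n, ∑ i : Fin n, (1/2 : ℝ) * (if i = j then 0 else 2) = n - 1 := by
    intro j
    rw [Finset.sum_congr rfl (g := fun i => 1 - if i = j then (1:ℝ) else 0)
      (by intro i _; by_cases h : i = j <;> simp [h])]
    rw [Finset.sum_sub_distrib]
    simp [Finset.sum_ite_eq']
  constructor
  · rw [Fintype.sum_sum_type, Fintype.sum_sum_type]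
    simp [hw1, hw2, hw3]
    ring
  · intro j
    rcases j with j | j | ⟨⟩
    · rw [Fintype.sum_sum_type, Fintype.sum_sum_type]
      simp only [hw1, hw2, hw3, hee, hem, he0]
      rw [hsum j]
      simp
    · rw [Fintype.sum_sum_type, Fintype.sum_sum_type]
      simp only [hw1, hw2, hw3, hmm, hme, hm0]
      rw [hsum j]
      simp
    · rw [Fintype.sum_sum_type, Fintype.sum_sum_type]
      simp only [hw1, hw2, hw3, h0e, h0m, sub_self, norm_zero, mul_one, mul_zero]
      simp
      ring
end

section
/- Let (X, d) be a finite quasihypermetric space and let μ be a function X → ℝ with ∑_x μ(x) = 1 such that d_μ(x) := ∑_y μ(y) d(x, y) is equal to a constant c for all x ∈ X. Then for every ν : X → ℝ with ∑_x ν(x) = 1, one has ∑_{x,y} ν(x)ν(y)d(x,y) ≤ c; in particular M(X) = c, where M(X) = sup over mass-1 measures ν of I(ν). -/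
theorem stmt_18 {X : Type*} [MetricSpace X] [Fintype X]
    (hqhm : ∀ σ : X → ℝ, ∑ x, σ x = 0 →
      ∑ x, ∑ y, σ x * σ y * dist x y ≤ 0)
    (μ : X → ℝ) (hμ : ∑ x, μ x = 1) (c : ℝ)
    (hinv : ∀ x : X, ∑ y, μ y * dist x y = c) :
    IsGreatest {r : ℝ | ∃ ν : X → ℝ, ∑ x, ν x = 1 ∧
        r = ∑ x, ∑ y, ν x * ν y * dist x y} c := by
  have hIμ : ∑ x, ∑ y, μ x * μ y * dist x y = c := by
    have : ∀ x : X, ∑ y, μ x * μ y * dist x y = μ x * c := by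
      intro x
      rw [← hinv x, Finset.mul_sum]
      exact Finset.sum_congr rfl fun y _ => by ring
    simp_rw [this, ← Finset.sum_mul, hμ, one_mul]
  constructor
  · exact ⟨μ, hμ, hIμ.symm⟩
  · rintro r ⟨ν, hν, rfl⟩
    set σ : X → ℝ := fun x => ν x - μ x with hσ
    have hσ0 : ∑ x, σ x = 0 := by
      simp [hσ, Finset.sum_sub_distrib, hμ, hν]
    -- cross term 1: ∑x ∑y σ x * μ y * dist x y = 0
    have cross1 : ∑ x, ∑ y, σ x * μ y * dist x y = 0 := by
      have : ∀ x : X, ∑ y, σ x * μ y * dist x y = σ x * c := by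
        intro x
        rw [← hinv x, Finset.mul_sum]
        exact Finset.sum_congr rfl fun y _ => by ring
      simp_rw [this, ← Finset.sum_mul, hσ0, zero_mul]
    -- cross term 2: ∑x ∑y μ x * σ y * dist x y = 0
    have cross2 : ∑ x, ∑ y, μ x * σ y * dist x y = 0 := by
      rw [Finset.sum_comm]
      have : ∀ y : X, ∑ x, μ x * σ y * dist x y = σ y * c := by
        intro y
        rw [← hinv y, Finset.mul_sum]
        refine Finset.sum_congr rfl fun x _ => by rw [dist_comm]; ring
      simp_rw [this, ← Finset.sum_mul, hσ0, zero_mul]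
    have expand : ∑ x, ∑ y, ν x * ν y * dist x y
        = (∑ x, ∑ y, μ x * μ y * dist x y)
        + (∑ x, ∑ y, σ x * μ y * dist x y)
        + (∑ x, ∑ y, μ x * σ y * dist x y)
        + (∑ x, ∑ y, σ x * σ y * dist x y) := by
      rw [← Finset.sum_add_distrib, ← Finset.sum_add_distrib, ← Finset.sum_add_distrib]
      refine Finset.sum_congr rfl fun x _ => ?_
      rw [← Finset.sum_add_distrib, ← Finset.sum_add_distrib, ← Finset.sum_add_distrib]
      refine Finset.sum_congr rfl fun y _ => ?_
      simp only [hσ]; ring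
    rw [expand, hIμ, cross1, cross2]
    have := hqhm σ hσ0
    linarith
end
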